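/- arXiv:2002.01613 — 2 statements merged into one kernel-verified Lean document; each statement's English description precedes it below -/
import Mathlib

section
/- Let T = λ•I + S be a hypercyclic bounded linear operator on a separable Banach space X over 𝕜 (𝕜 = ℝ or ℂ), where λ ∈ 𝕜 and S is a bounded linear operator on X. Then S is cyclic and S has dense range. -/
open Filter Topology Polynomial

variable {𝕜 X : Type*} [RCLike 𝕜] [NormedAddCommGroup X] [NormedSpace 𝕜 X]

/-- `T` is hypercyclic: some vector has dense orbit. -/
def Hypercyclic (T : X →L[𝕜] X) : Prop :=
  ∃ x : X, Dense (Set.range fun n : ℕ => (T ^ n) x)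

/-- `T` is cyclic: the span of some orbit is dense. -/
def Cyclic (T : X →L[𝕜] X) : Prop :=
  ∃ x : X, Dense (Submodule.span 𝕜 (Set.range fun n : ℕ => (T ^ n) x) : Set X)

/-- The Hypercyclicity Criterion. -/
def HypercyclicityCriterion (T : X →L[𝕜] X) : Prop :=
  ∃ (X₀ Y₀ : Set X) (n : ℕ → ℕ) (S : ℕ → X → X),
    Dense X₀ ∧ Dense Y₀ ∧ StrictMono n ∧ (∀ k, 0 < n k) ∧
    (∀ x ∈ X₀, Tendsto (fun k => (T ^ n k) x) atTop (𝓝 0)) ∧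
    (∀ y ∈ Y₀, Tendsto (fun k => S k y) atTop (𝓝 0)) ∧
    (∀ y ∈ Y₀, Tendsto (fun k => (T ^ n k) (S k y)) atTop (𝓝 y))

/-- The Cyclicity Criterion. -/
def CyclicityCriterion (T : X →L[𝕜] X) : Prop :=
  ∃ (V W : Set X) (p : ℕ → Polynomial 𝕜) (S : ℕ → X → X),
    Dense V ∧ Dense W ∧
    (∀ x ∈ V, Tendsto (fun k => aeval T (p k) x) atTop (𝓝 0)) ∧
    (∀ x ∈ W, Tendsto (fun k => S k x) atTop (𝓝 0)) ∧
    (∀ x ∈ W, Tendsto (fun k => aeval T (p k) (S k x)) atTop (𝓝 x))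


/-! The span of the `S`-orbit of `x` is `S`-invariant, hence invariant under `T = λ + S`, so it
contains the dense `T`-orbit of `x`. If `S` did not have dense range, Hahn–Banach would give a
functional `φ ≠ 0` vanishing on the range of `S`, so that `φ ∘ T = λ φ`. Then `φ` would map the
dense orbit `Tⁿ x` onto the sequence `λⁿ φ x`, which is never dense in `𝕜`: it is bounded if
`‖λ‖ ≤ 1` and stays away from `0` otherwise. -/

theorem Submodule.exists_dual_eq_one_of_notMem_closure {p : Submodule 𝕜 X} {x : X}
    (hx : x ∉ closure (p : Set X)) : ∃ φ : StrongDual 𝕜 X, φ x = 1 ∧ ∀ y ∈ p, φ y = 0 := by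
  set N := p.topologicalClosure
  -- makes `X ⧸ N` a normed space, whose dual separates points
  have : IsClosed (N : Set X) := p.isClosed_topologicalClosure
  obtain ⟨g, hg⟩ := SeparatingDual.exists_eq_one (R := 𝕜) (x := N.mkQ x)
    ((Submodule.Quotient.mk_eq_zero N).not.mpr hx)
  refine ⟨g.comp N.mkQL, hg, fun y hy => ?_⟩
  have : N.mkQ y = 0 := (Submodule.Quotient.mk_eq_zero N).mpr (p.le_topologicalClosure hy)
  simp [this]

theorem not_denseRange_pow_mul (lam c : 𝕜) : ¬DenseRange fun n : ℕ => lam ^ n * c := by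
  intro hd
  have hclosed {C : Set 𝕜} (hC : IsClosed C) (h : ∀ n : ℕ, lam ^ n * c ∈ C) (z : 𝕜) : z ∈ C :=
    hC.closure_subset_iff.mpr (Set.range_subset_iff.mpr h) (hd z)
  rcases le_or_gt ‖lam‖ 1 with hlam | hlam
  · have hbdd (n : ℕ) : lam ^ n * c ∈ Metric.closedBall 0 ‖c‖ := by
      simpa [norm_mul] using
        mul_le_of_le_one_left (norm_nonneg c) (pow_le_one₀ (norm_nonneg lam) hlam)
    have hfar := hclosed Metric.isClosed_closedBall hbdd ((‖c‖ + 1 : ℝ) : 𝕜)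
    simp only [Metric.mem_closedBall, dist_zero_right, RCLike.norm_ofReal] at hfar
    linarith [le_abs_self (‖c‖ + 1)]
  rcases eq_or_ne c 0 with rfl | hc
  · simpa using hclosed isClosed_singleton (fun n => mul_zero (lam ^ n)) 1
  · have hbdd (n : ℕ) : lam ^ n * c ∈ {z : 𝕜 | ‖c‖ ≤ ‖z‖} := by
      simpa [norm_mul] using le_mul_of_one_le_left (norm_nonneg c) (one_le_pow₀ hlam.le)
    have hzero := hclosed (isClosed_le continuous_const continuous_norm) hbdd 0
    exact hc (norm_le_zero_iff.mp (by simpa using hzero))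

theorem Hypercyclic.comp_ne_smul {T : X →L[𝕜] X} (hT : Hypercyclic T) {φ : StrongDual 𝕜 X}
    (hφ : φ ≠ 0) (lam : 𝕜) : φ.comp T ≠ lam • φ := by
  intro hφT
  obtain ⟨x, hx⟩ := hT
  have horbit (n : ℕ) : φ ((T ^ n) x) = lam ^ n * φ x := by
    induction n with
    | zero => simp
    | succ n ih =>
      calc φ ((T ^ (n + 1)) x) = (φ.comp T) ((T ^ n) x) := by rw [pow_succ']; rfl
        _ = lam * φ ((T ^ n) x) := by rw [hφT]; rfl
        _ = lam ^ (n + 1) * φ x := by rw [ih, pow_succ', mul_assoc]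
  have hsurj : Function.Surjective φ :=
    LinearMap.surjective_of_ne_zero (f := (φ : X →ₗ[𝕜] 𝕜)) (by exact_mod_cast hφ)
  have hdense := hsurj.denseRange.comp hx φ.continuous
  simp only [Function.comp_def, horbit] at hdense
  exact not_denseRange_pow_mul lam (φ x) hdense

theorem mapsTo_span_range_pow_apply (S : X →L[𝕜] X) (x : X) :
    Set.MapsTo S (Submodule.span 𝕜 (Set.range fun n : ℕ => (S ^ n) x))
      (Submodule.span 𝕜 (Set.range fun n : ℕ => (S ^ n) x)) := by
  refine Submodule.span_le (p := (Submodule.span 𝕜 _).comap (S : X →ₗ[𝕜] X)) |>.mpr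
    (Set.range_subset_iff.mpr fun n => ?_)
  exact Submodule.subset_span ⟨n + 1, by simp [pow_succ']⟩

theorem span_range_pow_apply_smul_id_add_le (lam : 𝕜) (S : X →L[𝕜] X) (x : X) :
    Submodule.span 𝕜 (Set.range fun n : ℕ => ((lam • ContinuousLinearMap.id 𝕜 X + S) ^ n) x) ≤
      Submodule.span 𝕜 (Set.range fun n : ℕ => (S ^ n) x) := by
  set M := Submodule.span 𝕜 (Set.range fun n : ℕ => (S ^ n) x)
  have hmaps : Set.MapsTo (lam • ContinuousLinearMap.id 𝕜 X + S) M M := fun y hy =>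
    M.add_mem (M.smul_mem lam hy) (mapsTo_span_range_pow_apply S x hy)
  refine Submodule.span_le.mpr (Set.range_subset_iff.mpr fun n => ?_)
  rw [FunLike.coe_pow_eq_iterate]
  exact hmaps.iterate n (Submodule.subset_span ⟨0, by simp⟩)

theorem Hypercyclic.cyclic {T : X →L[𝕜] X} (hT : Hypercyclic T) : Cyclic T :=
  let ⟨x, hx⟩ := hT
  ⟨x, hx.mono Submodule.subset_span⟩

theorem Cyclic.of_smul_id_add {lam : 𝕜} {S : X →L[𝕜] X}
    (h : Cyclic (lam • ContinuousLinearMap.id 𝕜 X + S)) : Cyclic S :=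
  let ⟨x, hx⟩ := h
  ⟨x, hx.mono (span_range_pow_apply_smul_id_add_le lam S x)⟩

theorem denseRange_of_hypercyclic_smul_id_add {lam : 𝕜} {S : X →L[𝕜] X}
    (hT : Hypercyclic (lam • ContinuousLinearMap.id 𝕜 X + S)) : DenseRange S := by
  intro y
  by_contra hy
  obtain ⟨φ, hφy, hφS⟩ :=
    (LinearMap.range (S : X →ₗ[𝕜] X)).exists_dual_eq_one_of_notMem_closure (x := y) hy
  refine hT.comp_ne_smul (φ := φ) (fun h => by simp [h] at hφy) lam ?_
  ext z
  simpa using hφS _ (LinearMap.mem_range_self _ z)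

theorem cyclic_denseRange_of_hypercyclic_shift_general
    (T S : X →L[𝕜] X) (lam : 𝕜)
    (hTS : T = lam • ContinuousLinearMap.id 𝕜 X + S)
    (hT : Hypercyclic T) :
    Cyclic S ∧ DenseRange ⇑S := by
  subst hTS
  exact ⟨hT.cyclic.of_smul_id_add, denseRange_of_hypercyclic_smul_id_add hT⟩

theorem cyclic_denseRange_of_hypercyclic_shift
    [CompleteSpace X] [TopologicalSpace.SeparableSpace X]
    (T S : X →L[𝕜] X) (lam : 𝕜)
    (hTS : T = lam • ContinuousLinearMap.id 𝕜 X + S)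
    (hT : Hypercyclic T) :
    Cyclic S ∧ DenseRange ⇑S :=
  cyclic_denseRange_of_hypercyclic_shift_general T S lam hTS hT
end

section
/- Let X be a Banach space over 𝕜 (𝕜 = ℝ or ℂ) with the scalar-plus-compact property, i.e., every bounded linear operator on X is of the form λ•I + K with λ ∈ 𝕜 and K a compact operator. Let (e_n)_{n ≥ 0} be a sequence in X with ‖e_n‖ = 1 for all n, for which there exists a constant C > 0 such that for all natural numbers m ≤ n and all scalars a₀, …, a_{n}, one has ‖∑_{i ≤ m} a_i e_i‖ ≤ C ‖∑_{i ≤ n} a_i e_i‖ (i.e., (e_n) is a normalized basic sequence), and let J ⊆ ℕ be an infinite set. Define w(i) = 4(1 − 1/(2√i)) for integers i ≥ 1. Then there is no bounded linear operator T on X satisfying T e_j = w(j+1) • e_{j+1} for every j ∈ J. -/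
/-!
Write `T = λ I + K` with `K` compact. For `j ∈ J` the vectors `K e_j = w(j+1) e_{j+1} - λ e_j`
lie in a compact set, so some `j < j'` in `J` have `‖K e_j - K e_j'‖ < 2 / (1 + C)`. This
difference is a combination of `e_0, …, e_{j'+1}` whose last coefficient is `-w(j'+1)`, and the
basis projection bound gives `w(j'+1) ≤ (1 + C) ‖K e_j - K e_j'‖ < 2`, whereas `w ≥ 2`.
-/

open Finset

theorem exists_mem_lt_dist_lt_of_isCompact {α : Type*} [PseudoMetricSpace α] {s : Set α}
    (hs : IsCompact s) {J : Set ℕ} (hJ : J.Infinite) {u : ℕ → α} (hu : ∀ n ∈ J, u n ∈ s)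
    {ε : ℝ} (hε : 0 < ε) : ∃ i ∈ J, ∃ j ∈ J, i < j ∧ dist (u i) (u j) < ε := by
  have hνJ : ∀ n, Nat.nth (· ∈ J) n ∈ J := Nat.nth_mem_of_infinite hJ
  obtain ⟨a, -, φ, hφ, hlim⟩ := hs.tendsto_subseq (x := u ∘ Nat.nth (· ∈ J)) fun n ↦ hu _ (hνJ n)
  obtain ⟨N, hN⟩ := Metric.cauchySeq_iff'.1 hlim.cauchySeq ε hε
  refine ⟨_, hνJ (φ N), _, hνJ (φ (N + 1)), ?_, ?_⟩
  · exact (Nat.nth_strictMono hJ).comp hφ N.lt_succ_self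
  · rw [dist_comm]
    exact hN (N + 1) N.le_succ

theorem norm_le_one_add_mul_norm_sum_range_succ {E : Type*} [SeminormedAddCommGroup E]
    {x : ℕ → E} {n : ℕ} {C : ℝ}
    (h : ‖∑ i ∈ range n, x i‖ ≤ C * ‖∑ i ∈ range (n + 1), x i‖) :
    ‖x n‖ ≤ (1 + C) * ‖∑ i ∈ range (n + 1), x i‖ :=
  calc ‖x n‖ = ‖∑ i ∈ range (n + 1), x i - ∑ i ∈ range n, x i‖ := by
        rw [sum_range_succ, add_sub_cancel_left]
    _ ≤ ‖∑ i ∈ range (n + 1), x i‖ + ‖∑ i ∈ range n, x i‖ := norm_sub_le _ _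
    _ ≤ (1 + C) * ‖∑ i ∈ range (n + 1), x i‖ := by linarith

theorem sum_range_single_smul {R M : Type*} [Semiring R] [AddCommMonoid M] [Module R M]
    (e : ℕ → M) {i n : ℕ} (hi : i < n) (c : R) :
    ∑ k ∈ range n, (Pi.single i c : ℕ → R) k • e k = c • e i := by
  simp [Pi.single_apply, ite_smul, hi]

theorem norm_le_one_add_mul_norm_sub_of_partial_sum_le {𝕜 X : Type*} [NormedField 𝕜]
    [SeminormedAddCommGroup X] [NormedSpace 𝕜 X] {e : ℕ → X} {C : ℝ} {j j' : ℕ}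
    (hB : ∀ a : ℕ → 𝕜,
      ‖∑ i ∈ range (j' + 1), a i • e i‖ ≤ C * ‖∑ i ∈ range (j' + 1 + 1), a i • e i‖)
    (he : ‖e (j' + 1)‖ = 1) (hjj' : j < j') (lam c c' : 𝕜) :
    ‖c'‖ ≤ (1 + C) * ‖(c • e (j + 1) - lam • e j) - (c' • e (j' + 1) - lam • e j')‖ := by
  set a : ℕ → 𝕜 :=
    Pi.single j (-lam) + Pi.single (j + 1) c + Pi.single j' lam + Pi.single (j' + 1) (-c')
  have hsum : ∑ i ∈ range (j' + 1 + 1), a i • e i =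
      (c • e (j + 1) - lam • e j) - (c' • e (j' + 1) - lam • e j') := by
    simp (disch := omega) only [a, Pi.add_apply, add_smul, sum_add_distrib, sum_range_single_smul]
    module
  have hlast : a (j' + 1) = -c' := by
    simp [a, show j' + 1 ≠ j by omega, show j' ≠ j by omega]
  have := norm_le_one_add_mul_norm_sum_range_succ (hB a)
  rwa [hsum, hlast, norm_smul, norm_neg, he, mul_one] at this

theorem two_le_four_mul_one_sub_one_div_two_mul_sqrt {x : ℝ} (hx : 1 ≤ x) :
    2 ≤ 4 * (1 - 1 / (2 * √x)) := by
  have h1 : 1 ≤ √x := Real.one_le_sqrt.2 hx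
  have : 1 / (2 * √x) ≤ 1 / 2 := by gcongr; linarith
  linarith

/-- On a Banach space with the scalar-plus-compact property, no bounded operator `T` can act as
`T e_j = w(j+1) e_{j+1}`, where `w(i) = 4(1 - 1/(2√i))`, along an infinite set `J` of indices of
a normalized basic sequence. -/
theorem no_weighted_shift_on_scalar_plus_compact {𝕜 X : Type*} [RCLike 𝕜]
    [NormedAddCommGroup X] [NormedSpace 𝕜 X]
    (hX : ∀ A : X →L[𝕜] X, ∃ (lam : 𝕜) (K : X →L[𝕜] X),
      IsCompactOperator ⇑K ∧ A = lam • ContinuousLinearMap.id 𝕜 X + K)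
    (e : ℕ → X) (he : ∀ n, ‖e n‖ = 1)
    (hbasic : ∃ C > (0 : ℝ), ∀ m n : ℕ, m ≤ n → ∀ a : ℕ → 𝕜,
      ‖∑ i ∈ Finset.range (m + 1), a i • e i‖ ≤ C * ‖∑ i ∈ Finset.range (n + 1), a i • e i‖)
    (J : Set ℕ) (hJ : J.Infinite)
    (w : ℕ → ℝ) (hw : ∀ i : ℕ, 1 ≤ i → w i = 4 * (1 - 1 / (2 * Real.sqrt i))) :
    ¬ ∃ T : X →L[𝕜] X, ∀ j ∈ J, T (e j) = ((w (j + 1) : ℝ) : 𝕜) • e (j + 1) := by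
  rintro ⟨T, hT⟩
  obtain ⟨C, hC, hB⟩ := hbasic
  obtain ⟨lam, K, hK, rfl⟩ := hX T
  have hKe : ∀ j ∈ J, K (e j) = ((w (j + 1) : ℝ) : 𝕜) • e (j + 1) - lam • e j := fun j hj ↦ by
    rw [← hT j hj]; simp
  obtain ⟨j, hj, j', hj', hjj', hdist⟩ := exists_mem_lt_dist_lt_of_isCompact
    (hK.isCompact_closure_image_closedBall 1) hJ (u := fun n ↦ K (e n))
    (fun n _ ↦ subset_closure ⟨e n, by simp [he], rfl⟩) (ε := 2 / (1 + C)) (by positivity)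
  have hw2 : 2 ≤ w (j' + 1) := by
    rw [hw _ (by omega)]
    exact two_le_four_mul_one_sub_one_div_two_mul_sqrt (by simp)
  have key := norm_le_one_add_mul_norm_sub_of_partial_sum_le (hB j' (j' + 1) j'.le_succ)
    (he _) hjj' lam ((w (j + 1) : ℝ) : 𝕜) ((w (j' + 1) : ℝ) : 𝕜)
  rw [← hKe j hj, ← hKe j' hj', ← dist_eq_norm, RCLike.norm_ofReal,
    abs_of_nonneg (by linarith)] at key
  rw [lt_div_iff₀' (by positivity)] at hdist
  linarith
end
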